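/- arXiv:2006.08118 — 2 statements merged into one kernel-verified Lean document; each statement's English description precedes it below -/
import Mathlib

section
/- Let p and q be two distinct prime numbers, let ℤ_(p) and ℤ_(q) be the localizations of ℤ at p and q respectively, let R be the ring of matrices [[a, x],[0, b]] with a ∈ ℤ_(p), x ∈ ℚ, b ∈ ℤ_(q), let L be the right ideal of R consisting of matrices [[0, x],[0, y]] with x, y ∈ ℤ_(q), and let U = R/L as a right R-module. Then for every submodule X of U and every nonzero homomorphism f : U → U/X, either (i) there exists a homomorphism h : U → U such that π ∘ h = f, where π : U → U/X is the natural epimorphism, or (ii) there exist a submodule N of U and a surjective homomorphism h : N → U such that f ∘ h = π|_N. -/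
/-- The localization `ℤ_(p)` of `ℤ` at the prime `p`, realized as the subring of `ℚ`
consisting of the fractions `n / d` with `p ∤ d`. -/
def Zloc (p : ℕ) (hp : p.Prime) : Subring ℚ where
  carrier := {x : ℚ | ∃ n d : ℤ, ¬ (p : ℤ) ∣ d ∧ x * d = n}
  zero_mem' := ⟨0, 1, by simpa using (Nat.prime_iff_prime_int.mp hp).not_dvd_one, by norm_num⟩
  one_mem' := ⟨1, 1, by simpa using (Nat.prime_iff_prime_int.mp hp).not_dvd_one, by norm_num⟩
  add_mem' := by
    rintro x y ⟨n1, d1, hd1, h1⟩ ⟨n2, d2, hd2, h2⟩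
    refine ⟨n1 * d2 + n2 * d1, d1 * d2, ?_, ?_⟩
    · intro h
      rcases ((Nat.prime_iff_prime_int.mp hp).dvd_mul.mp h) with h | h
      exacts [hd1 h, hd2 h]
    · push_cast
      calc (x + y) * ((d1 : ℚ) * d2) = (x * d1) * d2 + (y * d2) * d1 := by ring
        _ = (n1 : ℚ) * d2 + (n2 : ℚ) * d1 := by rw [h1, h2]
  neg_mem' := by
    rintro x ⟨n, d, hd, h⟩
    exact ⟨-n, d, hd, by push_cast; linarith⟩
  mul_mem' := by
    rintro x y ⟨n1, d1, hd1, h1⟩ ⟨n2, d2, hd2, h2⟩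
    refine ⟨n1 * n2, d1 * d2, ?_, ?_⟩
    · intro h
      rcases ((Nat.prime_iff_prime_int.mp hp).dvd_mul.mp h) with h | h
      exacts [hd1 h, hd2 h]
    · push_cast
      calc (x * y) * ((d1 : ℚ) * d2) = (x * d1) * (y * d2) := by ring
        _ = (n1 : ℚ) * n2 := by rw [h1, h2]

/-- The triangular matrix ring `[[ℤ_(p), ℚ], [0, ℤ_(q)]]`, as a subring of the `2 × 2`
rational matrices. -/
def TriRing (p q : ℕ) (hp : p.Prime) (hq : q.Prime) :
    Subring (Matrix (Fin 2) (Fin 2) ℚ) where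
  carrier := {A | A 1 0 = 0 ∧ A 0 0 ∈ Zloc p hp ∧ A 1 1 ∈ Zloc q hq}
  zero_mem' := ⟨rfl, (Zloc p hp).zero_mem, (Zloc q hq).zero_mem⟩
  one_mem' := ⟨by simp [Matrix.one_apply], by simpa using (Zloc p hp).one_mem,
    by simpa using (Zloc q hq).one_mem⟩
  add_mem' := by
    rintro A B ⟨hA0, hA1, hA2⟩ ⟨hB0, hB1, hB2⟩
    exact ⟨by simp [hA0, hB0], (Zloc p hp).add_mem hA1 hB1, (Zloc q hq).add_mem hA2 hB2⟩
  neg_mem' := by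
    rintro A ⟨hA0, hA1, hA2⟩
    exact ⟨by simp [hA0], (Zloc p hp).neg_mem hA1, (Zloc q hq).neg_mem hA2⟩
  mul_mem' := by
    rintro A B ⟨hA0, hA1, hA2⟩ ⟨hB0, hB1, hB2⟩
    refine ⟨?_, ?_, ?_⟩
    · simp [Matrix.mul_apply, Fin.sum_univ_two, hA0, hB0]
    · have : (A * B) 0 0 = A 0 0 * B 0 0 + A 0 1 * B 1 0 := by
        simp [Matrix.mul_apply, Fin.sum_univ_two]
      rw [this, hB0, mul_zero, add_zero]
      exact (Zloc p hp).mul_mem hA1 hB1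
    · have : (A * B) 1 1 = A 1 0 * B 0 1 + A 1 1 * B 1 1 := by
        simp [Matrix.mul_apply, Fin.sum_univ_two]
      rw [this, hA0, zero_mul, zero_add]
      exact (Zloc q hq).mul_mem hA2 hB2

/-- The right ideal `L = [[0, ℤ_(q)], [0, ℤ_(q)]]` of `TriRing p q`, as a submodule of the
right module `TriRing p q` over itself. -/
def Lideal (p q : ℕ) (hp : p.Prime) (hq : q.Prime) :
    Submodule (TriRing p q hp hq)ᵐᵒᵖ (TriRing p q hp hq) where
  carrier := {A | (A : Matrix (Fin 2) (Fin 2) ℚ) 0 0 = 0 ∧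
    (A : Matrix (Fin 2) (Fin 2) ℚ) 0 1 ∈ Zloc q hq ∧
    (A : Matrix (Fin 2) (Fin 2) ℚ) 1 1 ∈ Zloc q hq}
  zero_mem' := ⟨rfl, (Zloc q hq).zero_mem, (Zloc q hq).zero_mem⟩
  add_mem' := by
    rintro A B ⟨hA0, hA1, hA2⟩ ⟨hB0, hB1, hB2⟩
    exact ⟨by simp [hA0, hB0], by simpa using (Zloc q hq).add_mem hA1 hB1,
      by simpa using (Zloc q hq).add_mem hA2 hB2⟩
  smul_mem' := by
    rintro r A ⟨hA0, hA1, hA2⟩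
    have hr := r.unop.2
    have hsmul : ((r • A : TriRing p q hp hq) : Matrix (Fin 2) (Fin 2) ℚ) =
        (A : Matrix (Fin 2) (Fin 2) ℚ) * (r.unop : Matrix (Fin 2) (Fin 2) ℚ) := rfl
    refine ⟨?_, ?_, ?_⟩
    · rw [hsmul]
      have : ((A : Matrix (Fin 2) (Fin 2) ℚ) * (r.unop : Matrix (Fin 2) (Fin 2) ℚ)) 0 0 =
          (A : Matrix (Fin 2) (Fin 2) ℚ) 0 0 * (r.unop : Matrix (Fin 2) (Fin 2) ℚ) 0 0 +
          (A : Matrix (Fin 2) (Fin 2) ℚ) 0 1 * (r.unop : Matrix (Fin 2) (Fin 2) ℚ) 1 0 := by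
        simp [Matrix.mul_apply, Fin.sum_univ_two]
      rw [this, hA0, hr.1, zero_mul, mul_zero, add_zero]
    · rw [hsmul]
      have : ((A : Matrix (Fin 2) (Fin 2) ℚ) * (r.unop : Matrix (Fin 2) (Fin 2) ℚ)) 0 1 =
          (A : Matrix (Fin 2) (Fin 2) ℚ) 0 0 * (r.unop : Matrix (Fin 2) (Fin 2) ℚ) 0 1 +
          (A : Matrix (Fin 2) (Fin 2) ℚ) 0 1 * (r.unop : Matrix (Fin 2) (Fin 2) ℚ) 1 1 := by
        simp [Matrix.mul_apply, Fin.sum_univ_two]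
      rw [this, hA0, zero_mul, zero_add]
      exact (Zloc q hq).mul_mem hA1 hr.2.2
    · rw [hsmul]
      have : ((A : Matrix (Fin 2) (Fin 2) ℚ) * (r.unop : Matrix (Fin 2) (Fin 2) ℚ)) 1 1 =
          (A : Matrix (Fin 2) (Fin 2) ℚ) 1 0 * (r.unop : Matrix (Fin 2) (Fin 2) ℚ) 0 1 +
          (A : Matrix (Fin 2) (Fin 2) ℚ) 1 1 * (r.unop : Matrix (Fin 2) (Fin 2) ℚ) 1 1 := by
        simp [Matrix.mul_apply, Fin.sum_univ_two]
      rw [this, A.2.1, zero_mul, zero_add]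
      exact (Zloc q hq).mul_mem hA2 hr.2.2

/-- The uniserial module `U = R/L`. -/
abbrev Umod (p q : ℕ) (hp : p.Prime) (hq : q.Prime) :=
  TriRing p q hp hq ⧸ Lideal p q hp hq

/-! `U` is cyclic, generated by `1 + L = e + L` with `e = !![1, 0; 0, 0]`, so `f (1 + L)` lifts to
`w e = !![a, 0; 0, 0]` for some `a ∈ ℤ_(p)`, and then `f (t + L) = π (!![a, 0; 0, 0] t + L)`.
If `a ∈ ℤ_(q)`, left multiplication by `!![a, 0; 0, 0]` preserves `L` and descends to the lift
`h` of (i). Otherwise `a⁻¹ ∈ ℤ_(q)`, so `!![a, 0; 0, 0] t ∈ L` forces `t ∈ L`: the map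
`t + L ↦ !![a, 0; 0, 0] t + L` is injective, and its inverse on its image `N` gives (ii). -/

open MulOpposite

section RightIdealQuotient

variable {R : Type*} [Ring R] (L : Submodule Rᵐᵒᵖ R)

theorem Submodule.Quotient.mk_eq_op_smul_mk_one (r : R) :
    (Submodule.Quotient.mk r : R ⧸ L) = op r • Submodule.Quotient.mk 1 := by
  rw [← Submodule.Quotient.mk_smul, op_smul_eq_mul, one_mul]

theorem LinearMap.map_mk_eq_op_smul {V : Type*} [AddCommGroup V] [Module Rᵐᵒᵖ V]
    (f : R ⧸ L →ₗ[Rᵐᵒᵖ] V) (r : R) :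
    f (Submodule.Quotient.mk r) = op r • f (Submodule.Quotient.mk 1) := by
  rw [Submodule.Quotient.mk_eq_op_smul_mk_one, map_smul]

end RightIdealQuotient

open LinearMap in
theorem LinearMap.exists_surjective_comp_eq_comp_subtype {R M U V : Type*} [Ring R]
    [AddCommGroup M] [Module R M] [AddCommGroup U] [Module R U] [AddCommGroup V] [Module R V]
    (φ ψ : M →ₗ[R] U) (f π : U →ₗ[R] V) (hker : ker φ ≤ ker ψ)
    (hψ : Function.Surjective ψ) (hcomm : f ∘ₗ ψ = π ∘ₗ φ) :
    ∃ (N : Submodule R U) (h : N →ₗ[R] U),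
      Function.Surjective h ∧ f ∘ₗ h = π ∘ₗ N.subtype := by
  set h := (ker φ).liftQ ψ hker ∘ₗ φ.quotKerEquivRange.symm.toLinearMap
  have h_apply (m : M) : h ⟨φ m, mem_range_self φ m⟩ = ψ m := by
    simp [h, quotKerEquivRange_symm_apply_image]
  refine ⟨range φ, h, fun u ↦ ?_, ?_⟩
  · obtain ⟨m, rfl⟩ := hψ u
    exact ⟨_, h_apply m⟩
  · ext ⟨_, m, rfl⟩
    simpa [h_apply] using LinearMap.congr_fun hcomm m

theorem inv_mem_Zloc_of_notMem {q : ℕ} {hq : q.Prime} {a : ℚ} (ha : a ∉ Zloc q hq) :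
    a⁻¹ ∈ Zloc q hq := by
  have hden : (q : ℤ) ∣ a.den := by
    by_contra h
    exact ha ⟨a.num, a.den, h, by exact_mod_cast Rat.mul_den_eq_num a⟩
  have hnum : ¬ (q : ℤ) ∣ a.num := fun hnum ↦ hq.not_dvd_one <|
    a.reduced ▸ Nat.dvd_gcd (Int.natCast_dvd.mp hnum) (Int.natCast_dvd_natCast.mp hden)
  have ha₀ : a ≠ 0 := by rintro rfl; exact ha (Zloc q hq).zero_mem
  refine ⟨a.den, a.num, hnum, ?_⟩
  rw [← Rat.mul_den_eq_num a]
  field_simp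
  norm_cast

namespace TriRing

variable {p q : ℕ} {hp : p.Prime} {hq : q.Prime}

def corner (a : ℚ) (ha : a ∈ Zloc p hp) : TriRing p q hp hq :=
  ⟨!![a, 0; 0, 0], by simp, by simpa using ha, by simp⟩

theorem coe_corner_mul {a : ℚ} (ha : a ∈ Zloc p hp) (t : TriRing p q hp hq) :
    ((corner a ha * t : TriRing p q hp hq) : Matrix (Fin 2) (Fin 2) ℚ) =
      !![a * (t : Matrix (Fin 2) (Fin 2) ℚ) 0 0, a * (t : Matrix (Fin 2) (Fin 2) ℚ) 0 1;
        0, 0] := by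
  ext i j
  fin_cases i <;> fin_cases j <;> simp [corner, Matrix.mul_apply, t.2.1]

theorem mul_corner_one (t : TriRing p q hp hq) :
    t * corner 1 (Zloc p hp).one_mem = corner _ t.2.2.1 := by
  ext i j : 2
  fin_cases i <;> fin_cases j <;> simp [corner, Matrix.mul_apply, t.2.1]

theorem one_sub_corner_one_mem_Lideal :
    1 - corner 1 (Zloc p hp).one_mem ∈ Lideal p q hp hq := by
  refine ⟨?_, ?_, ?_⟩ <;> simp [corner, (Zloc q hq).zero_mem, (Zloc q hq).one_mem]

theorem corner_mul_mem_Lideal {a : ℚ} (ha : a ∈ Zloc p hp) (haq : a ∈ Zloc q hq)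
    {s : TriRing p q hp hq} (hs : s ∈ Lideal p q hp hq) :
    corner a ha * s ∈ Lideal p q hp hq := by
  obtain ⟨hs₀₀, hs₀₁, -⟩ := hs
  refine ⟨?_, ?_, ?_⟩ <;> rw [coe_corner_mul] <;>
    simp [hs₀₀, mul_mem haq hs₀₁, (Zloc q hq).zero_mem]

theorem mem_Lideal_of_corner_mul_mem {a : ℚ} (ha : a ∈ Zloc p hp) (haq : a ∉ Zloc q hq)
    {t : TriRing p q hp hq} (ht : corner a ha * t ∈ Lideal p q hp hq) :
    t ∈ Lideal p q hp hq := by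
  have ha₀ : a ≠ 0 := by rintro rfl; exact haq (Zloc q hq).zero_mem
  obtain ⟨ht₀₀, ht₀₁, -⟩ := ht
  rw [coe_corner_mul] at ht₀₀ ht₀₁
  simp only [Matrix.of_apply, Matrix.cons_val', Matrix.cons_val_zero, Matrix.cons_val_one]
    at ht₀₀ ht₀₁
  refine ⟨(mul_eq_zero.mp ht₀₀).resolve_left ha₀, ?_, t.2.2.2⟩
  simpa [ha₀] using mul_mem (inv_mem_Zloc_of_notMem haq) ht₀₁

theorem exists_corner_of_linearMap (X : Submodule (TriRing p q hp hq)ᵐᵒᵖ (Umod p q hp hq))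
    (f : Umod p q hp hq →ₗ[(TriRing p q hp hq)ᵐᵒᵖ] (Umod p q hp hq ⧸ X)) :
    ∃ (a : ℚ) (ha : a ∈ Zloc p hp), ∀ t : TriRing p q hp hq,
      f (Submodule.Quotient.mk t) = X.mkQ (Submodule.Quotient.mk (corner a ha * t)) := by
  obtain ⟨w, hw⟩ := (X.mkQ_surjective.comp (Lideal p q hp hq).mkQ_surjective)
    (f (Submodule.Quotient.mk 1))
  have hw₀₀ : (w : Matrix (Fin 2) (Fin 2) ℚ) 0 0 ∈ Zloc p hp := w.2.2.1
  have hone : f (Submodule.Quotient.mk 1) = X.mkQ (Submodule.Quotient.mk (corner _ hw₀₀)) := by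
    have hmk_one : (Submodule.Quotient.mk 1 : Umod p q hp hq) =
        Submodule.Quotient.mk (corner 1 (Zloc p hp).one_mem) :=
      (Submodule.Quotient.eq _).mpr one_sub_corner_one_mem_Lideal
    rw [hmk_one, LinearMap.map_mk_eq_op_smul _ f, ← hw, Function.comp_apply,
      ← map_smul, ← map_smul, op_smul_eq_mul, mul_corner_one]
    rfl
  refine ⟨_, hw₀₀, fun t ↦ ?_⟩
  rw [LinearMap.map_mk_eq_op_smul _ f, hone, ← map_smul, ← Submodule.Quotient.mk_smul,
    op_smul_eq_mul]

end TriRing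

open TriRing in
theorem stmt_16_general (p q : ℕ) (hp : p.Prime) (hq : q.Prime)
    (X : Submodule (TriRing p q hp hq)ᵐᵒᵖ (Umod p q hp hq))
    (f : Umod p q hp hq →ₗ[(TriRing p q hp hq)ᵐᵒᵖ] (Umod p q hp hq ⧸ X)) :
    (∃ h : Umod p q hp hq →ₗ[(TriRing p q hp hq)ᵐᵒᵖ] Umod p q hp hq,
      X.mkQ ∘ₗ h = f) ∨
    (∃ (N : Submodule (TriRing p q hp hq)ᵐᵒᵖ (Umod p q hp hq))
        (h : ↥N →ₗ[(TriRing p q hp hq)ᵐᵒᵖ] Umod p q hp hq),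
      Function.Surjective h ∧ f ∘ₗ h = X.mkQ ∘ₗ N.subtype) := by
  obtain ⟨a, ha, hf⟩ := exists_corner_of_linearMap X f
  set L := Lideal p q hp hq
  set mulCorner := LinearMap.mulLeft (TriRing p q hp hq)ᵐᵒᵖ (corner a ha : TriRing p q hp hq)
  by_cases haq : a ∈ Zloc q hq
  · refine .inl ⟨L.mapQ L mulCorner fun s hs ↦ corner_mul_mem_Lideal ha haq hs, ?_⟩
    exact Submodule.linearMap_qext _ (LinearMap.ext fun t ↦ (hf t).symm)
  · refine .inr <| LinearMap.exists_surjective_comp_eq_comp_subtype (L.mkQ ∘ₗ mulCorner) L.mkQ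
      f X.mkQ ?_ L.mkQ_surjective (LinearMap.ext hf)
    rw [LinearMap.ker_comp, Submodule.ker_mkQ]
    exact fun t ↦ mem_Lideal_of_corner_mul_mem ha haq

/-- For distinct primes `p`, `q`, let `U = R/L` where `R = [[ℤ_(p), ℚ], [0, ℤ_(q)]]` and
`L = [[0, ℤ_(q)], [0, ℤ_(q)]]`. For every submodule `X` of `U` and every nonzero
homomorphism `f : U → U/X`, either (i) there is `h : U → U` with `π ∘ h = f`, where
`π : U → U/X` is the natural epimorphism, or (ii) there are a submodule `N` of `U` and a
surjective homomorphism `h : N → U` with `f ∘ h = π|_N`. -/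
theorem stmt_16 (p q : ℕ) (hp : p.Prime) (hq : q.Prime) (hpq : p ≠ q)
    (X : Submodule (TriRing p q hp hq)ᵐᵒᵖ (Umod p q hp hq))
    (f : Umod p q hp hq →ₗ[(TriRing p q hp hq)ᵐᵒᵖ] (Umod p q hp hq ⧸ X)) (hf : f ≠ 0) :
    (∃ h : Umod p q hp hq →ₗ[(TriRing p q hp hq)ᵐᵒᵖ] Umod p q hp hq,
      X.mkQ ∘ₗ h = f) ∨
    (∃ (N : Submodule (TriRing p q hp hq)ᵐᵒᵖ (Umod p q hp hq))
        (h : ↥N →ₗ[(TriRing p q hp hq)ᵐᵒᵖ] Umod p q hp hq),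
      Function.Surjective h ∧ f ∘ₗ h = X.mkQ ∘ₗ N.subtype) :=
  stmt_16_general p q hp hq X f
end

section
/- Let p and q be two distinct prime numbers, let ℤ_(p) and ℤ_(q) be the localizations of ℤ at p and q respectively, let R be the ring of matrices [[a, x],[0, b]] with a ∈ ℤ_(p), x ∈ ℚ, b ∈ ℤ_(q), let L be the right ideal of R consisting of matrices [[0, x],[0, y]] with x, y ∈ ℤ_(q), and let U = R/L as a right R-module. Then the right R-module U² is lifting. -/
/-- A submodule `N` of `M` is *small* (superfluous) in `M` if `N + X ≠ M`
for every proper submodule `X` of `M`. -/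
def IsSmallSubmodule {R M : Type*} [Ring R] [AddCommGroup M] [Module R M]
    (N : Submodule R M) : Prop :=
  ∀ X : Submodule R M, X ≠ ⊤ → N ⊔ X ≠ ⊤

/-- `X` is a direct summand of `M`. -/
def IsDirectSummand {R M : Type*} [Ring R] [AddCommGroup M] [Module R M]
    (X : Submodule R M) : Prop :=
  ∃ Y : Submodule R M, IsCompl X Y

/-- A module `M` is *lifting* if for every submodule `N` of `M` there is a direct summand
`X` of `M` with `X ⊆ N` such that `N/X` is small in `M/X`. -/
def IsLiftingModule (R M : Type*) [Ring R] [AddCommGroup M] [Module R M] : Prop :=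
  ∀ N : Submodule R M, ∃ X : Submodule R M,
    X ≤ N ∧ IsDirectSummand X ∧ IsSmallSubmodule (N.map X.mkQ)

/-- An internal finite direct sum decomposition `M = ⨁ᵢ Fᵢ`. -/
def IsInternalDirectSum {R M ι : Type*} [Ring R] [AddCommGroup M] [Module R M]
    (F : ι → Submodule R M) : Prop :=
  (⨆ i, F i) = ⊤ ∧ ∀ i, Disjoint (F i) (⨆ j ∈ ({i}ᶜ : Set ι), F j)

/-- A module `M` satisfies the *finite internal exchange property* if for any direct
summand `X` of `M` and any finite direct sum decomposition `M = M₁ ⊕ ⋯ ⊕ Mₙ` there are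
submodules `Mᵢ' ⊆ Mᵢ` with `M = X ⊕ M₁' ⊕ ⋯ ⊕ Mₙ'`. -/
def SatisfiesFIEP (R M : Type*) [Ring R] [AddCommGroup M] [Module R M] : Prop :=
  ∀ (X : Submodule R M), IsDirectSummand X →
    ∀ (n : ℕ) (Mi : Fin n → Submodule R M), IsInternalDirectSum Mi →
      ∃ Mi' : Fin n → Submodule R M, (∀ i, Mi' i ≤ Mi i) ∧
        IsInternalDirectSum (fun o : Option (Fin n) => o.elim X Mi')

/-!
An element of `U = R/L` is determined by its top-left entry `a ∈ ℤ_(p)` and by its top-right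
entry modulo `ℤ_(q)`. The elements of `M = U²` whose two top-left entries are non-units form a
small submodule `Rad`, so it suffices to find, for every `N ≤ M`, a direct summand `X ≤ N` of `M`
with `N ≤ X + Rad`. If `N ≠ M` is not contained in `Rad`, then, up to swapping the two factors,
`N` contains `v = (1, c)`, and `N ≤ vR + Rad`. A complement of `vR` is `(d, 1)R`, where `d` is `p`
or `p/q` according as `c` is `q`-integral or not: then `1 - dc` is a `p`-adic unit, so
`vR + (d, 1)R = M`, and the `q`-adic norm of `1 - dc` is as large as it can be, which forces the
top-right entries of the elements of `vR ∩ (d, 1)R` into `ℤ_(q)`.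
-/

section SmallSubmodules

variable {R M M' : Type*} [Ring R] [AddCommGroup M] [Module R M] [AddCommGroup M'] [Module R M']

theorem isSmallSubmodule_iff {K : Submodule R M} :
    IsSmallSubmodule K ↔ ∀ W : Submodule R M, K ⊔ W = ⊤ → W = ⊤ := by
  simp only [IsSmallSubmodule, not_imp_not]

theorem IsSmallSubmodule.mono {K N : Submodule R M} (hK : IsSmallSubmodule K) (hNK : N ≤ K) :
    IsSmallSubmodule N :=
  isSmallSubmodule_iff.2 fun W hW => isSmallSubmodule_iff.1 hK W <|
    top_le_iff.1 (hW ▸ sup_le_sup_right hNK W)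

theorem IsSmallSubmodule.map {K : Submodule R M} (hK : IsSmallSubmodule K) (f : M →ₗ[R] M') :
    IsSmallSubmodule (K.map f) := by
  refine isSmallSubmodule_iff.2 fun W hW => ?_
  have hcomap : K ⊔ W.comap f = ⊤ := by
    refine eq_top_iff.2 fun m _ => ?_
    obtain ⟨_, ⟨k, hk, rfl⟩, w, hw, hkw⟩ :=
      Submodule.mem_sup.1 (hW ▸ Submodule.mem_top : f m ∈ K.map f ⊔ W)
    refine Submodule.mem_sup.2 ⟨k, hk, m - k, ?_, by abel⟩
    simpa [Submodule.mem_comap, map_sub, ← hkw] using hw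
  have hrange : K.map f ≤ W :=
    (Submodule.map_mono le_top).trans <| Submodule.map_le_iff_le_comap.2 <|
      (isSmallSubmodule_iff.1 hK _ hcomap).ge
  rwa [sup_eq_right.2 hrange] at hW

end SmallSubmodules

section Lifting

variable {R M : Type*} [Ring R] [AddCommGroup M] [Module R M]

def HasSummandModulo (K N : Submodule R M) : Prop :=
  ∃ X : Submodule R M, X ≤ N ∧ IsDirectSummand X ∧ N ≤ X ⊔ K

theorem isLiftingModule_of_hasSummandModulo {K : Submodule R M} (hK : IsSmallSubmodule K)
    (h : ∀ N, HasSummandModulo K N) : IsLiftingModule R M := by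
  intro N
  obtain ⟨X, hXN, hX, hNX⟩ := h N
  refine ⟨X, hXN, hX, (hK.map X.mkQ).mono ?_⟩
  calc N.map X.mkQ ≤ (X ⊔ K).map X.mkQ := Submodule.map_mono hNX
    _ = K.map X.mkQ := by rw [Submodule.map_sup, Submodule.mkQ_map_self, bot_sup_eq]

theorem IsDirectSummand.map_equiv {X : Submodule R M} (hX : IsDirectSummand X) (e : M ≃ₗ[R] M) :
    IsDirectSummand (X.map (e : M →ₗ[R] M)) :=
  let ⟨Y, hXY⟩ := hX
  ⟨Y.map (e : M →ₗ[R] M), (Submodule.orderIsoMapComap e).isCompl hXY⟩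

theorem HasSummandModulo.of_map_equiv {K N : Submodule R M} (e : M ≃ₗ[R] M)
    (hK : K.map (e : M →ₗ[R] M) = K) (h : HasSummandModulo K (N.map (e : M →ₗ[R] M))) :
    HasSummandModulo K N := by
  obtain ⟨X, hXN, hX, hNX⟩ := h
  have hK' : K.map (e.symm : M →ₗ[R] M) = K := (Submodule.map_symm_eq_iff e).2 hK
  have hN : (N.map (e : M →ₗ[R] M)).map (e.symm : M →ₗ[R] M) = N :=
    (Submodule.map_symm_eq_iff e).2 rfl
  refine ⟨X.map (e.symm : M →ₗ[R] M), hN ▸ Submodule.map_mono hXN, hX.map_equiv e.symm, ?_⟩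
  simpa only [hN, Submodule.map_sup, hK'] using
    Submodule.map_mono (f := (e.symm : M →ₗ[R] M)) hNX

end Lifting

theorem Submodule.map_prodComm_prod {R M N : Type*} [Semiring R] [AddCommMonoid M] [Module R M]
    [AddCommMonoid N] [Module R N] (P : Submodule R M) (Q : Submodule R N) :
    (P.prod Q).map (LinearEquiv.prodComm R M N : M × N →ₗ[R] N × M) = Q.prod P := by
  ext ⟨x, y⟩
  simp [Submodule.mem_map_equiv, and_comm]

theorem padicNorm_one_sub_of_ne_one {p : ℕ} [Fact p.Prime] {a : ℚ} (ha : padicNorm p a ≠ 1) :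
    padicNorm p (1 - a) = max 1 (padicNorm p a) := by
  rw [sub_eq_add_neg, padicNorm.add_eq_max_of_ne, padicNorm.one, padicNorm.neg]
  rwa [padicNorm.one, padicNorm.neg, ne_comm]

namespace Zloc

variable {p q : ℕ} {hp : p.Prime} {hq : q.Prime}

theorem mem_iff_padicNorm_le_one {x : ℚ} : x ∈ Zloc p hp ↔ padicNorm p x ≤ 1 := by
  have := Fact.mk hp
  constructor
  · rintro ⟨n, d, hd, hxd⟩
    have h := congrArg (padicNorm p) hxd
    rw [padicNorm.mul, (padicNorm.int_eq_one_iff d).2 hd, mul_one] at h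
    exact h ▸ padicNorm.of_int n
  · intro hx
    refine ⟨x.num, x.den, fun hden => ?_, by exact_mod_cast x.mul_den_eq_num⟩
    have hnum : ¬ (p : ℤ) ∣ x.num := fun hnum =>
      Nat.Prime.not_coprime_iff_dvd.2
        ⟨p, hp, Int.natCast_dvd.1 hnum, Int.natCast_dvd_natCast.1 hden⟩ x.reduced
    have h := congrArg (padicNorm p) (show x * x.den = x.num by exact_mod_cast x.mul_den_eq_num)
    rw [padicNorm.mul, (padicNorm.int_eq_one_iff _).2 hnum] at h
    have hden' := (padicNorm.int_lt_one_iff (x.den : ℤ)).2 hden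
    push_cast at hden'
    nlinarith [padicNorm.nonneg (p := p) (x.den : ℚ)]

theorem isUnit_iff_padicNorm_eq_one {a : Zloc p hp} : IsUnit a ↔ padicNorm p a = 1 := by
  have := Fact.mk hp
  have ha : padicNorm p a ≤ 1 := mem_iff_padicNorm_le_one.1 a.2
  constructor
  · intro hunit
    obtain ⟨b, hab⟩ := isUnit_iff_exists_inv.1 hunit
    have h := congrArg (padicNorm p ∘ Subtype.val) hab
    simp only [Function.comp_apply, Subring.coe_mul, padicNorm.mul, OneMemClass.coe_one,
      padicNorm.one] at h
    nlinarith [mem_iff_padicNorm_le_one.1 b.2, padicNorm.nonneg (p := p) (a : ℚ)]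
  · intro ha1
    have ha0 : (a : ℚ) ≠ 0 := fun h => by simp [h] at ha1
    refine isUnit_iff_exists_inv.2
      ⟨⟨(a : ℚ)⁻¹, mem_iff_padicNorm_le_one.2 ?_⟩, Subtype.ext (mul_inv_cancel₀ ha0)⟩
    rw [inv_eq_one_div, padicNorm.div, padicNorm.one, ha1, div_one]

theorem mem_nonunits_iff_padicNorm_lt_one {a : Zloc p hp} :
    a ∈ nonunits (Zloc p hp) ↔ padicNorm p a < 1 := by
  rw [mem_nonunits_iff, isUnit_iff_padicNorm_eq_one, lt_iff_le_and_ne]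
  exact ⟨fun h => ⟨mem_iff_padicNorm_le_one.1 a.2, h⟩, And.right⟩

instance : IsLocalRing (Zloc p hp) :=
  IsLocalRing.of_nonunits_add fun a b ha hb => by
    have := Fact.mk hp
    rw [mem_nonunits_iff_padicNorm_lt_one] at *
    exact padicNorm.nonarchimedean.trans_lt (max_lt ha hb)

theorem natCast_mem_maximalIdeal : (p : Zloc p hp) ∈ IsLocalRing.maximalIdeal (Zloc p hp) := by
  have := Fact.mk hp
  rw [IsLocalRing.mem_maximalIdeal, mem_nonunits_iff_padicNorm_lt_one]
  exact padicNorm.padicNorm_p_lt_one_of_prime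

theorem mem_of_padicNorm_one_sub_mul {c d x y : ℚ}
    (hcd : padicNorm q (1 - d * c) = max 1 (padicNorm q d) * max 1 (padicNorm q c))
    (hx : x - d * y ∈ Zloc q hq) (hy : c * x - y ∈ Zloc q hq) :
    x ∈ Zloc q hq ∧ c * x ∈ Zloc q hq := by
  have := Fact.mk hq
  simp only [mem_iff_padicNorm_le_one] at *
  have hd : padicNorm q x * (max 1 (padicNorm q d) * max 1 (padicNorm q c)) ≤
      max 1 (padicNorm q d) * 1 := by
    rw [← hcd, ← padicNorm.mul, mul_one]
    calc padicNorm q (x * (1 - d * c)) = padicNorm q ((x - d * y) - d * (c * x - y)) := by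
          ring_nf
      _ ≤ max (padicNorm q (x - d * y)) (padicNorm q (d * (c * x - y))) := padicNorm.sub
      _ ≤ max 1 (padicNorm q d) := by
        rw [padicNorm.mul]
        exact max_le_max hx (mul_le_of_le_one_right (padicNorm.nonneg _) hy)
  have hxc : padicNorm q x * max 1 (padicNorm q c) ≤ 1 :=
    le_of_mul_le_mul_left (by rwa [mul_left_comm]) (one_pos.trans_le (le_max_left _ _))
  have hx0 := padicNorm.nonneg (p := q) x
  rw [padicNorm.mul]
  constructor <;> nlinarith [le_max_left 1 (padicNorm q c), le_max_right 1 (padicNorm q c)]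

theorem exists_isUnit_one_sub_mul (hq : q.Prime) (hpq : p ≠ q) (c : Zloc p hp) :
    ∃ d : Zloc p hp, IsUnit (1 - d * c) ∧
      padicNorm q (1 - d * c) = max 1 (padicNorm q d) * max 1 (padicNorm q c) := by
  have := Fact.mk hp
  have := Fact.mk hq
  have hunit : ∀ d ∈ IsLocalRing.maximalIdeal (Zloc p hp), IsUnit (1 - d * c) := fun d hd =>
    IsLocalRing.isUnit_one_sub_self_of_mem_nonunits _ (Ideal.mul_mem_right c _ hd)
  by_cases hc : padicNorm q c < 1
  · have hp1 : padicNorm q p = 1 := padicNorm.padicNorm_of_prime_of_ne hpq.symm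
    have hpc : padicNorm q (p * c) = padicNorm q c := by rw [padicNorm.mul, hp1, one_mul]
    refine ⟨p, hunit _ natCast_mem_maximalIdeal, ?_⟩
    push_cast
    rw [padicNorm_one_sub_of_ne_one (hpc ▸ hc.ne), hpc, hp1, max_self, one_mul]
  · rw [not_lt] at hc
    have hpq' : padicNorm p (p / q : ℚ) < 1 := by
      rw [padicNorm.div, padicNorm.padicNorm_of_prime_of_ne hpq, div_one]
      exact padicNorm.padicNorm_p_lt_one_of_prime
    have hdq : padicNorm q (p / q : ℚ) = q := by
      rw [padicNorm.div, padicNorm.padicNorm_of_prime_of_ne hpq.symm,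
        padicNorm.padicNorm_p_of_prime, one_div, inv_inv]
    have hdc : padicNorm q (p / q * c) = q * padicNorm q c := by rw [padicNorm.mul, hdq]
    have hq1 : (1 : ℚ) < q := by exact_mod_cast hq.one_lt
    refine ⟨⟨p / q, mem_iff_padicNorm_le_one.2 hpq'.le⟩,
      hunit _ ((IsLocalRing.mem_maximalIdeal _).2 (mem_nonunits_iff_padicNorm_lt_one.2 hpq')), ?_⟩
    change padicNorm q (1 - p / q * c) = max 1 (padicNorm q (p / q : ℚ)) * max 1 (padicNorm q c)
    rw [padicNorm_one_sub_of_ne_one (by rw [hdc]; nlinarith), hdc, hdq, max_eq_right hq1.le,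
      max_eq_right hc, max_eq_right (by nlinarith)]

end Zloc

namespace TriRing

variable {p q : ℕ} {hp : p.Prime} {hq : q.Prime}

local notation "𝓡" => TriRing p q hp hq

def topLeft : 𝓡 →+* Zloc p hp where
  toFun r := ⟨(r : Matrix (Fin 2) (Fin 2) ℚ) 0 0, r.2.2.1⟩
  map_one' := rfl
  map_mul' r s := Subtype.ext <| by simp [Matrix.mul_apply, Fin.sum_univ_two, s.2.1]
  map_zero' := rfl
  map_add' _ _ := rfl

@[simp]
theorem coe_topLeft (r : 𝓡) : (topLeft r : ℚ) = (r : Matrix (Fin 2) (Fin 2) ℚ) 0 0 := rfl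

def ofTopLeft : Zloc p hp →+ 𝓡 where
  toFun a := ⟨!![(a : ℚ), 0; 0, 0], rfl, by simp, by simp [(Zloc q hq).zero_mem]⟩
  map_zero' := Subtype.ext <| by ext i j; fin_cases i <;> fin_cases j <;> rfl
  map_add' _ _ := Subtype.ext <| by ext i j; fin_cases i <;> fin_cases j <;> simp

@[simp]
theorem topLeft_ofTopLeft (a : Zloc p hp) : topLeft (ofTopLeft a : 𝓡) = a := rfl

theorem mul_ofTopLeft (r : 𝓡) (a : Zloc p hp) : r * ofTopLeft a = ofTopLeft (topLeft r * a) :=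
  Subtype.ext <| by
    ext i j; fin_cases i <;> fin_cases j <;>
      simp [ofTopLeft, Matrix.mul_apply, Fin.sum_univ_two, r.2.1]

theorem ofTopLeft_mul_apply_zero_one (a : Zloc p hp) (r : 𝓡) :
    ((ofTopLeft a * r : 𝓡) : Matrix (Fin 2) (Fin 2) ℚ) 0 1 =
      a * (r : Matrix (Fin 2) (Fin 2) ℚ) 0 1 := by
  simp [ofTopLeft, Matrix.mul_apply, Fin.sum_univ_two]

end TriRing

namespace Umod

open TriRing Zloc IsLocalRing MulOpposite Submodule

variable {p q : ℕ} {hp : p.Prime} {hq : q.Prime}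

local notation "𝓡" => TriRing p q hp hq
local notation "𝓤" => Umod p q hp hq
local notation "𝓜" => Umod p q hp hq × Umod p q hp hq
local notation "π" => Submodule.mkQ (Lideal p q hp hq)

theorem mkQ_eq_mkQ_iff {r s : 𝓡} :
    π r = π s ↔ topLeft r = topLeft s ∧
      (r : Matrix (Fin 2) (Fin 2) ℚ) 0 1 - (s : Matrix (Fin 2) (Fin 2) ℚ) 0 1 ∈ Zloc q hq := by
  rw [mkQ_apply, mkQ_apply, Submodule.Quotient.eq]
  refine ⟨fun h => ⟨Subtype.ext (sub_eq_zero.1 h.1), h.2.1⟩, fun ⟨h₀, h₁⟩ => ⟨?_, h₁, ?_⟩⟩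
  · exact sub_eq_zero.2 (congrArg Subtype.val h₀)
  · exact (Zloc q hq).sub_mem r.2.2.2 s.2.2.2

theorem mkQ_eq_zero_iff {r : 𝓡} :
    π r = 0 ↔ topLeft r = 0 ∧ (r : Matrix (Fin 2) (Fin 2) ℚ) 0 1 ∈ Zloc q hq := by
  simpa using mkQ_eq_mkQ_iff (r := r) (s := 0)

theorem smul_mkQ (r s : 𝓡) : op s • π r = π (r * s) := rfl

theorem smul_mkQ_ofTopLeft_one (r : 𝓡) : op r • π (ofTopLeft 1) = π r := by
  rw [smul_mkQ, mkQ_eq_mkQ_iff, map_mul, topLeft_ofTopLeft, one_mul, ofTopLeft_mul_apply_zero_one]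
  simp

def rad : Submodule 𝓡ᵐᵒᵖ 𝓤 :=
  map π
    { carrier := {r | topLeft r ∈ maximalIdeal (Zloc p hp)}
      add_mem' := fun ha hb => by
        simp only [Set.mem_ofPred_eq, map_add] at *
        exact add_mem ha hb
      zero_mem' := by simp
      smul_mem' := fun s r hr => by
        simp only [Set.mem_ofPred_eq, smul_eq_mul_unop, map_mul] at *
        exact Ideal.mul_mem_right _ _ hr }

theorem mkQ_mem_rad_iff {r : 𝓡} : π r ∈ rad ↔ topLeft r ∈ maximalIdeal (Zloc p hp) := by
  refine ⟨fun ⟨s, hs, hsr⟩ => ?_, fun hr => ⟨r, hr, rfl⟩⟩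
  rwa [← (mkQ_eq_mkQ_iff.1 hsr).1]

def radM : Submodule 𝓡ᵐᵒᵖ 𝓜 := rad.prod rad

theorem radM_map_prodComm :
    radM.map (LinearEquiv.prodComm 𝓡ᵐᵒᵖ 𝓤 𝓤 : 𝓜 →ₗ[𝓡ᵐᵒᵖ] 𝓜) = radM :=
  map_prodComm_prod _ _

def vec (a b : Zloc p hp) : 𝓜 := (π (ofTopLeft a), π (ofTopLeft b))

theorem vec_add (a b a' b' : Zloc p hp) :
    vec a b + vec a' b' = (vec (a + a') (b + b') : 𝓜) := by
  simp [vec]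

theorem smul_vec (r : 𝓡ᵐᵒᵖ) (a b : Zloc p hp) :
    r • (vec a b : 𝓜) = (π (ofTopLeft a * r.unop), π (ofTopLeft b * r.unop)) := rfl

theorem smul_ofTopLeft_pair (A B : 𝓡) (x : Zloc p hp) :
    op (ofTopLeft x : 𝓡) • ((π A, π B) : 𝓜) = vec (topLeft A * x) (topLeft B * x) := by
  rw [Prod.smul_mk, smul_mkQ, smul_mkQ, mul_ofTopLeft, mul_ofTopLeft]
  rfl

theorem eq_top_of_vec_mem {W : Submodule 𝓡ᵐᵒᵖ 𝓜} (h₁ : vec 1 0 ∈ W) (h₂ : vec 0 1 ∈ W) :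
    W = ⊤ := by
  refine eq_top_iff.2 fun ⟨u, v⟩ _ => ?_
  obtain ⟨A, rfl⟩ := mkQ_surjective _ u
  obtain ⟨B, rfl⟩ := mkQ_surjective _ v
  have hAB : ((π A, π B) : 𝓜) = op A • vec 1 0 + op B • vec 0 1 := by
    simp only [vec, Prod.smul_mk, Prod.mk_add_mk, smul_mkQ_ofTopLeft_one, map_zero, smul_zero,
      add_zero, zero_add]
  rw [hAB]
  exact W.add_mem (W.smul_mem (op A) h₁) (W.smul_mem (op B) h₂)

theorem eq_top_of_isUnit_det {W : Submodule 𝓡ᵐᵒᵖ 𝓜} {A₁ B₁ A₂ B₂ : 𝓡}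
    (h₁ : (π A₁, π B₁) ∈ W) (h₂ : (π A₂, π B₂) ∈ W)
    (hdet : IsUnit (topLeft A₁ * topLeft B₂ - topLeft B₁ * topLeft A₂)) : W = ⊤ := by
  obtain ⟨u, hu⟩ := hdet
  have hcomb : ∀ x y,
      vec (topLeft A₁ * x + topLeft A₂ * y) (topLeft B₁ * x + topLeft B₂ * y) ∈ W := fun x y => by
    rw [← vec_add, ← smul_ofTopLeft_pair, ← smul_ofTopLeft_pair]
    exact W.add_mem (W.smul_mem _ h₁) (W.smul_mem _ h₂)
  have hinv : (↑u⁻¹ : Zloc p hp) * (topLeft A₁ * topLeft B₂ - topLeft B₁ * topLeft A₂) = 1 := by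
    rw [← hu, Units.inv_mul]
  apply eq_top_of_vec_mem
  · convert hcomb (↑u⁻¹ * topLeft B₂) (-(↑u⁻¹ * topLeft B₁)) using 2
    · linear_combination -hinv
    · ring
  · convert hcomb (-(↑u⁻¹ * topLeft A₂)) (↑u⁻¹ * topLeft A₁) using 2
    · ring
    · linear_combination -hinv

theorem exists_pair_mem_of_mem_sup_radM {W : Submodule 𝓡ᵐᵒᵖ 𝓜} {A B : 𝓡}
    (h : (π A, π B) ∈ radM ⊔ W) :
    ∃ A' B' : 𝓡, (π A', π B') ∈ W ∧ residue _ (topLeft A') = residue _ (topLeft A) ∧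
      residue _ (topLeft B') = residue _ (topLeft B) := by
  obtain ⟨ρ, ⟨⟨C, hC, hCρ⟩, ⟨D, hD, hDρ⟩⟩, w, hw, hρw⟩ := mem_sup.1 h
  refine ⟨A - C, B - D, ?_, ?_, ?_⟩
  · convert hw using 1
    rw [eq_sub_of_add_eq' hρw, map_sub, map_sub, hCρ, hDρ]
    rfl
  · rw [map_sub, map_sub, (residue_eq_zero_iff _).2 hC, sub_zero]
  · rw [map_sub, map_sub, (residue_eq_zero_iff _).2 hD, sub_zero]

theorem isSmallSubmodule_radM : IsSmallSubmodule (radM : Submodule 𝓡ᵐᵒᵖ 𝓜) := by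
  refine isSmallSubmodule_iff.2 fun W hW => ?_
  obtain ⟨A₁, B₁, hw₁, ha₁, hb₁⟩ :=
    exists_pair_mem_of_mem_sup_radM (hW ▸ mem_top : vec 1 0 ∈ radM ⊔ W)
  obtain ⟨A₂, B₂, hw₂, ha₂, hb₂⟩ :=
    exists_pair_mem_of_mem_sup_radM (hW ▸ mem_top : vec 0 1 ∈ radM ⊔ W)
  refine eq_top_of_isUnit_det hw₁ hw₂ ((residue_ne_zero_iff_isUnit _).1 ?_)
  simp [ha₁, hb₁, ha₂, hb₂]

theorem isCompl_span_vec {c d : Zloc p hp} (hdc : IsUnit (1 - d * c))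
    (hnorm : padicNorm q (1 - d * c) = max 1 (padicNorm q d) * max 1 (padicNorm q c)) :
    IsCompl (span 𝓡ᵐᵒᵖ {(vec 1 c : 𝓜)}) (span 𝓡ᵐᵒᵖ {vec d 1}) := by
  constructor
  · rw [disjoint_def]
    rintro m hmX hmY
    obtain ⟨r, rfl⟩ := mem_span_singleton.1 hmX
    obtain ⟨s, hs⟩ := mem_span_singleton.1 hmY
    rw [smul_vec, smul_vec, Prod.ext_iff, mkQ_eq_mkQ_iff, mkQ_eq_mkQ_iff] at hs
    simp only [map_mul, topLeft_ofTopLeft, ofTopLeft_mul_apply_zero_one, OneMemClass.coe_one,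
      one_mul] at hs
    obtain ⟨⟨h₀₀, h₀₁⟩, ⟨h₁₀, h₁₁⟩⟩ := hs
    have hr₀ : topLeft r.unop = 0 := by
      have : topLeft r.unop * (1 - d * c) = 0 := by linear_combination -h₀₀ + d * h₁₀
      exact (mul_eq_zero.1 this).resolve_right hdc.ne_zero
    obtain ⟨hr₁, hcr₁⟩ := mem_of_padicNorm_one_sub_mul hnorm
      (by simpa using (Zloc q hq).neg_mem h₀₁) (by simpa using (Zloc q hq).neg_mem h₁₁)
    rw [smul_vec, Prod.mk_eq_zero, mkQ_eq_zero_iff, mkQ_eq_zero_iff]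
    simp [ofTopLeft_mul_apply_zero_one, hr₀, hr₁, hcr₁]
  · refine codisjoint_iff.2 (eq_top_of_isUnit_det (mem_sup_left (mem_span_singleton_self _))
      (mem_sup_right (mem_span_singleton_self _)) ?_)
    simpa [mul_comm] using hdc

theorem hasSummandModulo_of_vec_mem (hpq : p ≠ q) {N : Submodule 𝓡ᵐᵒᵖ 𝓜} (hN : N ≠ ⊤)
    {c : Zloc p hp} (hc : vec 1 c ∈ N) : HasSummandModulo radM N := by
  obtain ⟨d, hdc, hnorm⟩ := exists_isUnit_one_sub_mul hq hpq c
  refine ⟨span _ {vec 1 c}, (span_singleton_le_iff_mem _ _).2 hc,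
    ⟨_, isCompl_span_vec hdc hnorm⟩, fun ⟨u, v⟩ hn => ?_⟩
  obtain ⟨A, rfl⟩ := mkQ_surjective _ u
  obtain ⟨B, rfl⟩ := mkQ_surjective _ v
  have hv : op (ofTopLeft (topLeft A) : 𝓡) • (vec 1 c : 𝓜) =
      vec (topLeft A) (c * topLeft A) := by
    rw [vec, smul_ofTopLeft_pair, topLeft_ofTopLeft, topLeft_ofTopLeft, one_mul]
  have hdiff : (π A, π B) - vec (topLeft A) (c * topLeft A) =
      (π (A - ofTopLeft (topLeft A)), π (B - ofTopLeft (c * topLeft A))) := by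
    simp [vec]
  rw [← sub_add_cancel (π A, π B) (vec (topLeft A) (c * topLeft A)), hdiff]
  refine add_mem ?_ (mem_sup_left (hv ▸ smul_mem _ _ (mem_span_singleton_self _)))
  by_cases hβ : topLeft B - c * topLeft A ∈ maximalIdeal (Zloc p hp)
  · exact mem_sup_right ⟨mkQ_mem_rad_iff.2 (by simp), mkQ_mem_rad_iff.2 (by simpa using hβ)⟩
  · refine absurd (eq_top_of_isUnit_det hc (hdiff ▸ N.sub_mem hn (hv ▸ N.smul_mem _ hc)) ?_) hN
    simpa using notMem_maximalIdeal.1 hβ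

theorem hasSummandModulo_of_pair_mem (hpq : p ≠ q) {N : Submodule 𝓡ᵐᵒᵖ 𝓜} (hN : N ≠ ⊤)
    {A B : 𝓡} (hAB : (π A, π B) ∈ N) (hA : IsUnit (topLeft A)) : HasSummandModulo radM N := by
  obtain ⟨u, hu⟩ := hA
  refine hasSummandModulo_of_vec_mem hpq hN (c := topLeft B * ↑u⁻¹) ?_
  convert N.smul_mem (op (ofTopLeft ↑u⁻¹)) hAB using 1
  rw [smul_ofTopLeft_pair, ← hu, Units.mul_inv]

theorem hasSummandModulo_radM (hpq : p ≠ q) (N : Submodule 𝓡ᵐᵒᵖ 𝓜) :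
    HasSummandModulo radM N := by
  by_cases hNtop : N = ⊤
  · exact ⟨⊤, hNtop.ge, ⟨⊥, isCompl_top_bot⟩, le_sup_of_le_left le_top⟩
  by_cases hNrad : N ≤ radM
  · exact ⟨⊥, bot_le, ⟨⊤, isCompl_bot_top⟩, le_sup_of_le_right hNrad⟩
  obtain ⟨⟨u, v⟩, hwN, hwR⟩ := SetLike.not_le_iff_exists.1 hNrad
  obtain ⟨A, rfl⟩ := mkQ_surjective _ u
  obtain ⟨B, rfl⟩ := mkQ_surjective _ v
  have hunit : IsUnit (topLeft A) ∨ IsUnit (topLeft B) := by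
    by_contra! h
    exact hwR ⟨mkQ_mem_rad_iff.2 ((mem_maximalIdeal _).2 h.1),
      mkQ_mem_rad_iff.2 ((mem_maximalIdeal _).2 h.2)⟩
  rcases hunit with hA | hB
  · exact hasSummandModulo_of_pair_mem hpq hNtop hwN hA
  · refine HasSummandModulo.of_map_equiv (LinearEquiv.prodComm _ 𝓤 𝓤) radM_map_prodComm ?_
    exact hasSummandModulo_of_pair_mem hpq (by simpa using hNtop) ⟨_, hwN, rfl⟩ hB

end Umod

/-- For distinct primes `p`, `q`, the right `R`-module `U²` is lifting, where `U = R/L`,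
`R = [[ℤ_(p), ℚ], [0, ℤ_(q)]]` and `L = [[0, ℤ_(q)], [0, ℤ_(q)]]`. -/
theorem stmt_17 (p q : ℕ) (hp : p.Prime) (hq : q.Prime) (hpq : p ≠ q) :
    IsLiftingModule (TriRing p q hp hq)ᵐᵒᵖ (Umod p q hp hq × Umod p q hp hq) :=
  isLiftingModule_of_hasSummandModulo Umod.isSmallSubmodule_radM (Umod.hasSummandModulo_radM hpq)
end
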